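/- arXiv:2509.03597 — 11 statements merged into one kernel-verified Lean document; each statement's English description precedes it below -/
import Mathlib

section
/- Let U1, V1, U2, V2 be real numbers with U1*V2 ≠ U2*V1, and define U_I = U1*U2*(V2 - V1)/(U1*V2 - U2*V1) and V_I = V1*V2*(U1 - U2)/(U1*V2 - U2*V1). Then U_I*V_I = (U_I - U1)*(V_I - V1) and U_I*V_I = (U_I - U2)*(V_I - V2). (Hence the three bulk lightcones in Poincaré AdS3 with boundary vertices (0,0), (U1,V1), (U2,V2) — given by z² = U·V, z² = (U−U1)(V−V1), z² = (U−U2)(V−V2) in null boundary coordinates — all pass through the single point with null coordinates (U_I, V_I).) -/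
/-- The three bulk lightcones in Poincaré AdS₃ with boundary vertices (0,0), (U1,V1),
(U2,V2) (given by z² = U·V, z² = (U−U1)(V−V1), z² = (U−U2)(V−V2) in null boundary
coordinates) all pass through the single point (U_I, V_I). -/
theorem lightcones_common_intersection (U1 V1 U2 V2 UI VI : ℝ)
    (h : U1 * V2 ≠ U2 * V1)
    (hUI : UI = U1 * U2 * (V2 - V1) / (U1 * V2 - U2 * V1))
    (hVI : VI = V1 * V2 * (U1 - U2) / (U1 * V2 - U2 * V1)) :
    UI * VI = (UI - U1) * (VI - V1) ∧ UI * VI = (UI - U2) * (VI - V2) := by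
  have hd : U1 * V2 - U2 * V1 ≠ 0 := sub_ne_zero.mpr h
  subst hUI hVI
  constructor <;> field_simp <;> ring
end

section
/- Let U1, V1, U2, V2 be real numbers with 0 < U1 < 2, 0 < V2 < 2, V1 < 0, U2 < 0, and U2*V1 > U1*V2. Define U_I = U1*U2*(V2 - V1)/(U1*V2 - U2*V1) and V_I = V1*V2*(U1 - U2)/(U1*V2 - U2*V1). Then U_I + V_I < 2 if and only if V1*U2*(2 - U1 - V2) > U1*V2*(2 - V1 - U2). -/
/-- In the 2-to-2 holographic scattering setup in Poincaré AdS₃, the intersection point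
(U_I, V_I) of the three lightcones lies to the past of the RT surface of R₁
(i.e. U_I + V_I < 2) if and only if the `u < d` condition holds. -/
theorem scattering_iff_u_lt_d (U1 V1 U2 V2 UI VI : ℝ)
    (hU1 : 0 < U1) (hU1' : U1 < 2) (hV2 : 0 < V2) (hV2' : V2 < 2)
    (hV1 : V1 < 0) (hU2 : U2 < 0) (hgt : U2 * V1 > U1 * V2)
    (hUI : UI = U1 * U2 * (V2 - V1) / (U1 * V2 - U2 * V1))
    (hVI : VI = V1 * V2 * (U1 - U2) / (U1 * V2 - U2 * V1)) :
    UI + VI < 2 ↔ V1 * U2 * (2 - U1 - V2) > U1 * V2 * (2 - V1 - U2) := by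
  have hD : U1 * V2 - U2 * V1 < 0 := by linarith
  subst hUI hVI
  rw [← add_div, div_lt_iff_of_neg hD]
  constructor <;> intro h <;> nlinarith [h]
end

section
/- Let U1, V1, U2, V2 be real numbers with 0 < U1 < 2, 0 < V2 < 2, V1 < 0, U2 < 0. Then |U1*V2*(2 - V1)*(2 - U2)| < |V1*U2*(2 - U1)*(2 - V2)| if and only if V1*U2*(2 - U1 - V2) > U1*V2*(2 - V1 - U2). In fact one has the polynomial identity V1*U2*(2 - U1)*(2 - V2) − U1*V2*(2 - V1)*(2 - U2) = 2*[V1*U2*(2 - U1 - V2) − U1*V2*(2 - V1 - U2)]. -/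
/-- The connected RT candidate is shorter than the disconnected one
(`|U1·V2·(2−V1)·(2−U2)| < |V1·U2·(2−U1)·(2−V2)|`) iff the `u < d` condition
`V1·U2·(2−U1−V2) > U1·V2·(2−V1−U2)` holds; moreover the stated polynomial identity holds. -/
theorem u_lt_d_iff_and_identity (U1 V1 U2 V2 : ℝ)
    (hU1 : 0 < U1) (hU1' : U1 < 2) (hV2 : 0 < V2) (hV2' : V2 < 2)
    (hV1 : V1 < 0) (hU2 : U2 < 0) :
    (|U1 * V2 * (2 - V1) * (2 - U2)| < |V1 * U2 * (2 - U1) * (2 - V2)| ↔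
      V1 * U2 * (2 - U1 - V2) > U1 * V2 * (2 - V1 - U2)) ∧
    V1 * U2 * (2 - U1) * (2 - V2) - U1 * V2 * (2 - V1) * (2 - U2)
      = 2 * (V1 * U2 * (2 - U1 - V2) - U1 * V2 * (2 - V1 - U2)) := by
  have ha : 0 < U1 * V2 * (2 - V1) * (2 - U2) := by
    have h1 : 0 < 2 - V1 := by linarith
    have h2 : 0 < 2 - U2 := by linarith
    positivity
  have hb : 0 < V1 * U2 * (2 - U1) * (2 - V2) := by
    have : 0 < V1 * U2 := mul_pos_of_neg_of_neg hV1 hU2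
    have h1 : 0 < 2 - U1 := by linarith
    have h2 : 0 < 2 - V2 := by linarith
    nlinarith [mul_pos (mul_pos this h1) h2]
  rw [abs_of_pos ha, abs_of_pos hb]
  constructor
  · constructor <;> intro h <;> nlinarith [h]
  · ring
end

section
/- For all real ℓ > 0 and μ > 0, the limit as ε → 0⁺ of [∫_{ℓ}^{1/ε} r/√((r²+μ²)(r²−ℓ²)) dr − log(2/(ε·√(ℓ²+μ²)))] equals 0. -/
open Filter

section aux

variable (ℓ μ : ℝ)

noncomputable def Fprim (r : ℝ) : ℝ :=
  Real.log (Real.sqrt (r ^ 2 + μ ^ 2) + Real.sqrt (r ^ 2 - ℓ ^ 2))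

lemma Fprim_hasDerivAt (hℓ : 0 < ℓ) (hμ : 0 < μ) {r : ℝ} (hr : ℓ < r) :
    HasDerivAt (Fprim ℓ μ) (r / Real.sqrt ((r ^ 2 + μ ^ 2) * (r ^ 2 - ℓ ^ 2))) r := by
  have hA : (0:ℝ) < r ^ 2 + μ ^ 2 := by positivity
  have hB : (0:ℝ) < r ^ 2 - ℓ ^ 2 := by nlinarith
  have hsA : (0:ℝ) < Real.sqrt (r ^ 2 + μ ^ 2) := Real.sqrt_pos.2 hA
  have hsB : (0:ℝ) < Real.sqrt (r ^ 2 - ℓ ^ 2) := Real.sqrt_pos.2 hB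
  have h1 : HasDerivAt (fun x : ℝ => x ^ 2 + μ ^ 2) (2 * r) r := by
    simpa using ((hasDerivAt_pow 2 r).add_const (μ ^ 2))
  have h2 : HasDerivAt (fun x : ℝ => x ^ 2 - ℓ ^ 2) (2 * r) r := by
    simpa using ((hasDerivAt_pow 2 r).sub_const (ℓ ^ 2))
  have hs1 : HasDerivAt (fun x : ℝ => Real.sqrt (x ^ 2 + μ ^ 2))
      (2 * r / (2 * Real.sqrt (r ^ 2 + μ ^ 2))) r := h1.sqrt hA.ne'
  have hs2 : HasDerivAt (fun x : ℝ => Real.sqrt (x ^ 2 - ℓ ^ 2))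
      (2 * r / (2 * Real.sqrt (r ^ 2 - ℓ ^ 2))) r := h2.sqrt hB.ne'
  have hsum := hs1.add hs2
  have hne : Real.sqrt (r ^ 2 + μ ^ 2) + Real.sqrt (r ^ 2 - ℓ ^ 2) ≠ 0 := by positivity
  have := hsum.log hne
  convert this using 1
  · rfl
  rw [Real.sqrt_mul hA.le]
  have hAA : Real.sqrt (r ^ 2 + μ ^ 2) * Real.sqrt (r ^ 2 + μ ^ 2) = r ^ 2 + μ ^ 2 :=
    Real.mul_self_sqrt hA.le
  have hBB : Real.sqrt (r ^ 2 - ℓ ^ 2) * Real.sqrt (r ^ 2 - ℓ ^ 2) = r ^ 2 - ℓ ^ 2 :=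
    Real.mul_self_sqrt hB.le
  simp only [Pi.add_apply]
  field_simp
  ring

lemma Fprim_continuous (hμ : 0 < μ) : Continuous (Fprim ℓ μ) := by
  apply Continuous.log
  · exact (Real.continuous_sqrt.comp (by continuity)).add
      (Real.continuous_sqrt.comp (by continuity))
  · intro x
    have h1 : (0:ℝ) < Real.sqrt (x ^ 2 + μ ^ 2) := Real.sqrt_pos.2 (by positivity)
    have h2 : (0:ℝ) ≤ Real.sqrt (x ^ 2 - ℓ ^ 2) := Real.sqrt_nonneg _
    positivity

lemma integral_eq (hℓ : 0 < ℓ) (hμ : 0 < μ) {R : ℝ} (hR : ℓ ≤ R) :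
    (∫ r in ℓ..R, r / Real.sqrt ((r ^ 2 + μ ^ 2) * (r ^ 2 - ℓ ^ 2)))
      = Fprim ℓ μ R - Fprim ℓ μ ℓ := by
  have hcont : ContinuousOn (Fprim ℓ μ) (Set.Icc ℓ R) :=
    (Fprim_continuous ℓ μ hμ).continuousOn
  have hderiv : ∀ x ∈ Set.Ioo ℓ R,
      HasDerivAt (Fprim ℓ μ) (x / Real.sqrt ((x ^ 2 + μ ^ 2) * (x ^ 2 - ℓ ^ 2))) x :=
    fun x hx => Fprim_hasDerivAt ℓ μ hℓ hμ hx.1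
  have hpos : ∀ x ∈ Set.Ioo ℓ R, 0 ≤ x / Real.sqrt ((x ^ 2 + μ ^ 2) * (x ^ 2 - ℓ ^ 2)) := by
    intro x hx
    have : 0 < x := hℓ.trans hx.1
    positivity
  have hint : IntervalIntegrable
      (fun x => x / Real.sqrt ((x ^ 2 + μ ^ 2) * (x ^ 2 - ℓ ^ 2))) MeasureTheory.volume ℓ R := by
    apply intervalIntegral.intervalIntegrable_deriv_of_nonneg
    · rwa [Set.uIcc_of_le hR]
    · rwa [min_eq_left hR, max_eq_right hR]
    · rwa [min_eq_left hR, max_eq_right hR]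
  exact intervalIntegral.integral_eq_sub_of_hasDerivAt_of_le hR hcont hderiv hint

end aux

/-- Asymptotic length of a shell-avoiding spacelike geodesic in the AdS₃ shell geometry:
as the UV cutoff ε → 0⁺, ∫_{ℓ}^{1/ε} r/√((r²+μ²)(r²−ℓ²)) dr − log(2/(ε√(ℓ²+μ²))) → 0. -/
theorem exterior_length_asymptotics (ℓ μ : ℝ) (hℓ : 0 < ℓ) (hμ : 0 < μ) :
    Tendsto
      (fun ε : ℝ =>
        (∫ r in ℓ..(1 / ε), r / Real.sqrt ((r ^ 2 + μ ^ 2) * (r ^ 2 - ℓ ^ 2)))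
          - Real.log (2 / (ε * Real.sqrt (ℓ ^ 2 + μ ^ 2))))
      (nhdsWithin 0 (Set.Ioi 0)) (nhds 0) := by
  set g : ℝ → ℝ := fun ε =>
    Real.log ((Real.sqrt (1 + μ ^ 2 * ε ^ 2) + Real.sqrt (1 - ℓ ^ 2 * ε ^ 2)) / 2) with hg
  have hgt : Tendsto g (nhdsWithin 0 (Set.Ioi 0)) (nhds 0) := by
    have hc : ContinuousAt g 0 := by
      apply Real.continuousAt_log ?_ |>.comp
      · fun_prop
      · norm_num
    have : g 0 = 0 := by simp [hg]
    simpa [this] using hc.continuousWithinAt.tendsto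
  apply hgt.congr'
  filter_upwards [Ioo_mem_nhdsGT_of_mem (by exact ⟨le_refl 0, by positivity⟩ :
      (0:ℝ) ∈ Set.Ico 0 (1/ℓ))] with ε hε
  obtain ⟨hε0, hε1⟩ := hε
  have hεℓ : ℓ < 1 / ε := (lt_div_iff₀ hε0).2 (by rw [mul_comm]; exact (lt_div_iff₀ hℓ).1 hε1)
  have hS : (0:ℝ) < Real.sqrt (ℓ ^ 2 + μ ^ 2) := Real.sqrt_pos.2 (by positivity)
  rw [integral_eq ℓ μ hℓ hμ hεℓ.le]
  have hFl : Fprim ℓ μ ℓ = Real.log (Real.sqrt (ℓ ^ 2 + μ ^ 2)) := by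
    simp [Fprim]
  have hlog2 : Real.log (2 / (ε * Real.sqrt (ℓ ^ 2 + μ ^ 2)))
      = Real.log 2 - Real.log ε - Real.log (Real.sqrt (ℓ ^ 2 + μ ^ 2)) := by
    rw [Real.log_div (by norm_num) (by positivity), Real.log_mul hε0.ne' hS.ne']
    ring
  have key : Fprim ℓ μ (1 / ε) + Real.log ε - Real.log 2 = g ε := by
    have h1 : Real.sqrt ((1/ε) ^ 2 + μ ^ 2) * ε = Real.sqrt (1 + μ ^ 2 * ε ^ 2) := by
      rw [show Real.sqrt ((1/ε) ^ 2 + μ ^ 2) * ε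
            = Real.sqrt (((1/ε) ^ 2 + μ ^ 2) * ε ^ 2) by
          rw [Real.sqrt_mul (by positivity) (ε ^ 2), Real.sqrt_sq hε0.le]]
      congr 1
      field_simp
    have hB : (0:ℝ) ≤ (1/ε) ^ 2 - ℓ ^ 2 := by nlinarith [sq_nonneg (1/ε - ℓ)]
    have h2 : Real.sqrt ((1/ε) ^ 2 - ℓ ^ 2) * ε = Real.sqrt (1 - ℓ ^ 2 * ε ^ 2) := by
      rw [show Real.sqrt ((1/ε) ^ 2 - ℓ ^ 2) * ε
            = Real.sqrt (((1/ε) ^ 2 - ℓ ^ 2) * ε ^ 2) by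
          rw [Real.sqrt_mul hB (ε ^ 2), Real.sqrt_sq hε0.le]]
      congr 1
      field_simp
    have hsum : (0:ℝ) < Real.sqrt ((1/ε) ^ 2 + μ ^ 2) + Real.sqrt ((1/ε) ^ 2 - ℓ ^ 2) := by
      have : (0:ℝ) < Real.sqrt ((1/ε) ^ 2 + μ ^ 2) := Real.sqrt_pos.2 (by positivity)
      positivity
    rw [hg]
    simp only [Fprim]
    rw [← Real.log_mul hsum.ne' hε0.ne', ← Real.log_div (by positivity) (by norm_num)]
    congr 1
    rw [add_mul, h1, h2]
  rw [hlog2, hFl]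
  linarith [key]
end

section
/- For all real numbers ℓ, R, μ with 0 < ℓ < R and μ > 0, the limit as ε → 0⁺ of [∫_{ℓ}^{R} r/√((r²+1)(r²−ℓ²)) dr + ∫_{R}^{1/ε} r/√((r²+μ²)(r²−ℓ²)) dr − log( (2/(ε·√(ℓ²+1))) · (√(R²+1)+√(R²−ℓ²))/(√(R²+μ²)+√(R²−ℓ²)) )] equals 0. -/
open Filter


lemma ads_hasDeriv (a ℓ : ℝ) (ha : 0 < a) (hℓ : 0 ≤ ℓ) (r : ℝ) (hr : ℓ < r) :
    HasDerivAt (fun r : ℝ => Real.log (Real.sqrt (r ^ 2 + a) + Real.sqrt (r ^ 2 - ℓ ^ 2)))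
      (r / Real.sqrt ((r ^ 2 + a) * (r ^ 2 - ℓ ^ 2))) r := by
  have hr0 : 0 < r := lt_of_le_of_lt hℓ hr
  have hA : 0 < r ^ 2 + a := by positivity
  have hB : 0 < r ^ 2 - ℓ ^ 2 := by nlinarith
  have sA : 0 < Real.sqrt (r ^ 2 + a) := Real.sqrt_pos.mpr hA
  have sB : 0 < Real.sqrt (r ^ 2 - ℓ ^ 2) := Real.sqrt_pos.mpr hB
  have d1 : HasDerivAt (fun r : ℝ => r ^ 2 + a) (2 * r) r := by
    simpa using (hasDerivAt_pow 2 r).add_const a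
  have d2 : HasDerivAt (fun r : ℝ => r ^ 2 - ℓ ^ 2) (2 * r) r := by
    simpa using (hasDerivAt_pow 2 r).sub_const (ℓ ^ 2)
  have ds1 := d1.sqrt hA.ne'
  have ds2 := d2.sqrt hB.ne'
  have dsum := ds1.add ds2
  have dlog := dsum.log (by show Real.sqrt (r ^ 2 + a) + Real.sqrt (r ^ 2 - ℓ ^ 2) ≠ 0; positivity)
  convert dlog using 1
  · rfl
  rw [Real.sqrt_mul hA.le]
  have eA : Real.sqrt (r ^ 2 + a) * Real.sqrt (r ^ 2 + a) = r ^ 2 + a :=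
    Real.mul_self_sqrt hA.le
  have eB : Real.sqrt (r ^ 2 - ℓ ^ 2) * Real.sqrt (r ^ 2 - ℓ ^ 2) = r ^ 2 - ℓ ^ 2 :=
    Real.mul_self_sqrt hB.le
  simp only [Pi.add_apply]
  field_simp
  nlinarith [sA, sB, eA, eB, mul_pos sA sB]

lemma ads_integrable (a ℓ R : ℝ) (ha : 0 < a) (h0 : 0 < ℓ) (hR : ℓ < R) :
    IntervalIntegrable (fun r : ℝ => r / Real.sqrt ((r ^ 2 + a) * (r ^ 2 - ℓ ^ 2)))
      MeasureTheory.volume ℓ R := by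
  have hmeas : MeasureTheory.AEStronglyMeasurable
      (fun r : ℝ => r / Real.sqrt ((r ^ 2 + a) * (r ^ 2 - ℓ ^ 2)))
      (MeasureTheory.volume.restrict (Set.uIoc ℓ R)) := by
    apply Measurable.aestronglyMeasurable
    exact measurable_id.div ((Real.continuous_sqrt.measurable).comp (by fun_prop))
  have hg : IntervalIntegrable (fun x : ℝ => (R / Real.sqrt (a * ℓ)) * ((x - ℓ) ^ (-(1/2) : ℝ)))
      MeasureTheory.volume ℓ R := by
    apply IntervalIntegrable.const_mul
    have := (intervalIntegral.intervalIntegrable_rpow' (a := 0) (b := R - ℓ)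
      (r := (-(1/2) : ℝ)) (by norm_num)).comp_sub_right ℓ
    simpa using this
  apply IntervalIntegrable.mono_fun hg hmeas
  rw [Set.uIoc_of_le hR.le]
  filter_upwards [MeasureTheory.ae_restrict_mem measurableSet_Ioc] with r hrmem
  obtain ⟨hr1, hr2⟩ := hrmem
  have hr0 : 0 < r := h0.trans hr1
  have hB : 0 < r ^ 2 - ℓ ^ 2 := by nlinarith
  have hA : 0 < r ^ 2 + a := by positivity
  have hrl : 0 < r - ℓ := sub_pos.mpr hr1
  have key : a * ℓ * (r - ℓ) ≤ (r ^ 2 + a) * (r ^ 2 - ℓ ^ 2) := by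
    nlinarith [mul_nonneg (sq_nonneg r) hB.le, mul_nonneg (mul_nonneg ha.le hr0.le) hrl.le]
  have hsq : Real.sqrt (a * ℓ * (r - ℓ)) ≤ Real.sqrt ((r ^ 2 + a) * (r ^ 2 - ℓ ^ 2)) :=
    Real.sqrt_le_sqrt key
  have hsq0 : 0 < Real.sqrt (a * ℓ * (r - ℓ)) := Real.sqrt_pos.mpr (by positivity)
  rw [Real.norm_eq_abs, Real.norm_eq_abs, abs_of_nonneg (by positivity),
    abs_of_nonneg (by
      have hR0 : 0 < R := h0.trans hR
      positivity)]
  have hrw : (R / Real.sqrt (a * ℓ)) * ((r - ℓ) ^ (-(1/2) : ℝ))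
      = R / Real.sqrt (a * ℓ * (r - ℓ)) := by
    rw [Real.rpow_neg hrl.le, ← Real.sqrt_eq_rpow, Real.sqrt_mul (by positivity : (0:ℝ) ≤ a * ℓ)]
    field_simp
  rw [hrw]
  calc r / Real.sqrt ((r ^ 2 + a) * (r ^ 2 - ℓ ^ 2))
      ≤ r / Real.sqrt (a * ℓ * (r - ℓ)) := div_le_div_of_nonneg_left hr0.le hsq0 hsq
    _ ≤ R / Real.sqrt (a * ℓ * (r - ℓ)) := by gcongr

lemma ads_integral (a ℓ : ℝ) (ha : 0 < a) (h0 : 0 < ℓ) {x y : ℝ} (hx : ℓ ≤ x) (hxy : x ≤ y) :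
    ∫ r in x..y, r / Real.sqrt ((r ^ 2 + a) * (r ^ 2 - ℓ ^ 2))
      = Real.log (Real.sqrt (y ^ 2 + a) + Real.sqrt (y ^ 2 - ℓ ^ 2))
        - Real.log (Real.sqrt (x ^ 2 + a) + Real.sqrt (x ^ 2 - ℓ ^ 2)) := by
  rcases eq_or_lt_of_le hxy with rfl | hlt
  · simp
  have hy : ℓ < y := lt_of_le_of_lt hx hlt
  have hcont : ContinuousOn
      (fun r : ℝ => Real.log (Real.sqrt (r ^ 2 + a) + Real.sqrt (r ^ 2 - ℓ ^ 2)))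
      (Set.Icc x y) := by
    apply Continuous.continuousOn
    apply Continuous.log
    · exact (Real.continuous_sqrt.comp (by continuity)).add
        (Real.continuous_sqrt.comp (by continuity))
    · intro r
      have h1 : 0 < Real.sqrt (r ^ 2 + a) := Real.sqrt_pos.mpr (by positivity)
      have h2 : 0 ≤ Real.sqrt (r ^ 2 - ℓ ^ 2) := Real.sqrt_nonneg _
      positivity
  have hderiv : ∀ r ∈ Set.Ioo x y,
      HasDerivWithinAt
        (fun r : ℝ => Real.log (Real.sqrt (r ^ 2 + a) + Real.sqrt (r ^ 2 - ℓ ^ 2)))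
        (r / Real.sqrt ((r ^ 2 + a) * (r ^ 2 - ℓ ^ 2))) (Set.Ioi r) r := by
    intro r hr
    exact (ads_hasDeriv a ℓ ha h0.le r (lt_of_le_of_lt hx hr.1)).hasDerivWithinAt
  have hint : IntervalIntegrable (fun r : ℝ => r / Real.sqrt ((r ^ 2 + a) * (r ^ 2 - ℓ ^ 2)))
      MeasureTheory.volume x y :=
    (ads_integrable a ℓ y ha h0 hy).mono_set (by
      rw [Set.uIcc_of_le hxy, Set.uIcc_of_le hy.le]
      exact Set.Icc_subset_Icc hx le_rfl)
  exact intervalIntegral.integral_eq_sub_of_hasDeriv_right_of_le hxy hcont hderiv hint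

/-- Asymptotic length of a shell-crossing spacelike geodesic in the AdS₃ shell geometry:
the sum of the interior and exterior integrals minus
log((2/(ε√(ℓ²+1)))·(√(R²+1)+√(R²−ℓ²))/(√(R²+μ²)+√(R²−ℓ²))) tends to 0 as ε → 0⁺. -/
theorem shell_crossing_length_asymptotics (ℓ R μ : ℝ) (h0 : 0 < ℓ) (hR : ℓ < R) (hμ : 0 < μ) :
    Tendsto
      (fun ε : ℝ =>
        (∫ r in ℓ..R, r / Real.sqrt ((r ^ 2 + 1) * (r ^ 2 - ℓ ^ 2)))
          + (∫ r in R..(1 / ε), r / Real.sqrt ((r ^ 2 + μ ^ 2) * (r ^ 2 - ℓ ^ 2)))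
          - Real.log ((2 / (ε * Real.sqrt (ℓ ^ 2 + 1)))
              * ((Real.sqrt (R ^ 2 + 1) + Real.sqrt (R ^ 2 - ℓ ^ 2))
                / (Real.sqrt (R ^ 2 + μ ^ 2) + Real.sqrt (R ^ 2 - ℓ ^ 2)))))
      (nhdsWithin 0 (Set.Ioi 0)) (nhds 0) := by
  have hR0 : 0 < R := h0.trans hR
  have hgl : Tendsto (fun ε : ℝ =>
      Real.log ((Real.sqrt (1 + μ ^ 2 * ε ^ 2) + Real.sqrt (1 - ℓ ^ 2 * ε ^ 2)) / 2))
      (nhdsWithin 0 (Set.Ioi 0)) (nhds 0) := by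
    have hcont : ContinuousAt (fun ε : ℝ =>
        Real.log ((Real.sqrt (1 + μ ^ 2 * ε ^ 2) + Real.sqrt (1 - ℓ ^ 2 * ε ^ 2)) / 2)) 0 := by
      apply ContinuousAt.log
      · fun_prop
      · norm_num
    have h00 : Real.log ((Real.sqrt (1 + μ ^ 2 * (0:ℝ) ^ 2)
        + Real.sqrt (1 - ℓ ^ 2 * (0:ℝ) ^ 2)) / 2) = 0 := by
      norm_num
    have := hcont.tendsto
    rw [h00] at this
    exact this.mono_left nhdsWithin_le_nhds
  refine Tendsto.congr' ?_ hgl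
  filter_upwards [Ioo_mem_nhdsGT_of_mem (Set.left_mem_Ico.mpr (by positivity : (0:ℝ) < 1/R))]
    with ε hε
  obtain ⟨hε0, hεR⟩ := hε
  have he : R < 1 / ε := by
    rw [lt_div_iff₀ hε0]
    have := (lt_div_iff₀ hR0).mp hεR
    nlinarith
  have I1 := ads_integral 1 ℓ one_pos h0 (le_refl ℓ) hR.le
  have I2 := ads_integral (μ ^ 2) ℓ (by positivity) h0 hR.le he.le
  rw [I1, I2]
  have hℓ0 : Real.sqrt (ℓ ^ 2 - ℓ ^ 2) = 0 := by simp
  rw [hℓ0, add_zero]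
  -- positivity facts
  have hBpos : (0:ℝ) < R ^ 2 - ℓ ^ 2 := by nlinarith
  have sA : 0 < Real.sqrt (R ^ 2 + 1) + Real.sqrt (R ^ 2 - ℓ ^ 2) := by positivity
  have sB : 0 < Real.sqrt (R ^ 2 + μ ^ 2) + Real.sqrt (R ^ 2 - ℓ ^ 2) := by positivity
  have hCB : (0:ℝ) < (1/ε) ^ 2 - ℓ ^ 2 := by nlinarith
  have sC : 0 < Real.sqrt ((1/ε) ^ 2 + μ ^ 2) + Real.sqrt ((1/ε) ^ 2 - ℓ ^ 2) := by positivity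
  have ss : 0 < Real.sqrt (ℓ ^ 2 + 1) := by positivity
  -- rewrite the sqrt identities
  have c1 : Real.sqrt (1 + μ ^ 2 * ε ^ 2) = ε * Real.sqrt ((1/ε) ^ 2 + μ ^ 2) := by
    rw [← Real.sqrt_sq hε0.le, ← Real.sqrt_mul (sq_nonneg ε)]
    congr 1
    field_simp
    rw [Real.sqrt_sq hε0.le]
  have c2 : Real.sqrt (1 - ℓ ^ 2 * ε ^ 2) = ε * Real.sqrt ((1/ε) ^ 2 - ℓ ^ 2) := by
    rw [← Real.sqrt_sq hε0.le, ← Real.sqrt_mul (sq_nonneg ε)]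
    congr 1
    field_simp
    rw [Real.sqrt_sq hε0.le]
  rw [c1, c2, ← mul_add]
  -- expand all the logs
  rw [Real.log_div (mul_ne_zero hε0.ne' sC.ne') (by norm_num : (2:ℝ) ≠ 0),
    Real.log_mul hε0.ne' sC.ne',
    Real.log_mul (by positivity : 2 / (ε * Real.sqrt (ℓ ^ 2 + 1)) ≠ 0)
      (by positivity : (Real.sqrt (R ^ 2 + 1) + Real.sqrt (R ^ 2 - ℓ ^ 2))
        / (Real.sqrt (R ^ 2 + μ ^ 2) + Real.sqrt (R ^ 2 - ℓ ^ 2)) ≠ 0),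
    Real.log_div (by norm_num : (2:ℝ) ≠ 0) (mul_ne_zero hε0.ne' ss.ne'),
    Real.log_mul hε0.ne' ss.ne',
    Real.log_div sA.ne' sB.ne']
  ring
end

section
/- Let ℓ > 0 and μ > 0 be real, and define r(s) = √(ℓ²·cosh²(s) + μ²·sinh²(s)) and φ(s) = (1/μ)·arctan((μ/ℓ)·tanh(s)) for s ∈ ℝ. Then for every s: r(s)²·φ'(s) = ℓ, and r'(s)²/(r(s)² + μ²) + r(s)²·φ'(s)² = 1. -/
open Real

/-- The curve r(s) = √(ℓ²cosh²s + μ²sinh²s), φ(s) = (1/μ)arctan((μ/ℓ)tanh s) is a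
unit-speed geodesic of the constant-time slice ds² = dr²/(r²+μ²) + r²dφ² of the exterior
shell geometry, with conserved angular momentum ℓ = r²·φ'. -/
theorem exterior_geodesic_identities (ℓ μ : ℝ) (hℓ : 0 < ℓ) (hμ : 0 < μ)
    (r φ : ℝ → ℝ)
    (hr : ∀ s, r s = Real.sqrt (ℓ ^ 2 * Real.cosh s ^ 2 + μ ^ 2 * Real.sinh s ^ 2))
    (hφ : ∀ s, φ s = (1 / μ) * Real.arctan ((μ / ℓ) * Real.tanh s)) :
    ∀ s, r s ^ 2 * deriv φ s = ℓ ∧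
      (deriv r s) ^ 2 / (r s ^ 2 + μ ^ 2) + r s ^ 2 * (deriv φ s) ^ 2 = 1 := by
  intro s
  have hc : 0 < Real.cosh s := Real.cosh_pos s
  have hc' : Real.cosh s ≠ 0 := ne_of_gt hc
  have hℓ' : ℓ ≠ 0 := ne_of_gt hℓ
  have hμ' : μ ≠ 0 := ne_of_gt hμ
  have hcs : Real.cosh s ^ 2 - Real.sinh s ^ 2 = 1 := Real.cosh_sq_sub_sinh_sq s
  set R : ℝ := ℓ ^ 2 * Real.cosh s ^ 2 + μ ^ 2 * Real.sinh s ^ 2 with hRdef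
  have hRpos : 0 < R := by positivity
  have hR' : R ≠ 0 := ne_of_gt hRpos
  -- derivative of tanh
  have htanh : HasDerivAt Real.tanh (1 / Real.cosh s ^ 2) s := by
    have heq : Real.tanh = fun x => Real.sinh x / Real.cosh x :=
      funext fun x => Real.tanh_eq_sinh_div_cosh x
    rw [heq]
    have h := (Real.hasDerivAt_sinh s).fun_div (Real.hasDerivAt_cosh s) hc'
    convert h using 1
    · rfl
    · rfl
    congr 1
    linear_combination -hcs
  -- derivative of φ
  have hφderiv : HasDerivAt φ ((1 / μ) * ((1 / (1 + ((μ / ℓ) * Real.tanh s) ^ 2)) *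
      ((μ / ℓ) * (1 / Real.cosh s ^ 2)))) s := by
    have h1 : HasDerivAt (fun x => (μ / ℓ) * Real.tanh x) ((μ / ℓ) * (1 / Real.cosh s ^ 2)) s :=
      htanh.const_mul _
    have h2 := (Real.hasDerivAt_arctan ((μ / ℓ) * Real.tanh s)).comp s h1
    have h3 := h2.const_mul (1 / μ)
    exact h3.congr_of_eventuallyEq (Filter.Eventually.of_forall fun x => hφ x)
  have hφval : deriv φ s = ℓ / R := by
    rw [hφderiv.deriv, Real.tanh_eq_sinh_div_cosh, hRdef]
    have hpos : (0:ℝ) < 1 + (μ / ℓ * (Real.sinh s / Real.cosh s)) ^ 2 := by positivity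
    field_simp; try ring
  -- derivative of r
  have hRderiv : HasDerivAt (fun x => ℓ ^ 2 * Real.cosh x ^ 2 + μ ^ 2 * Real.sinh x ^ 2)
      (ℓ ^ 2 * (2 * Real.cosh s * Real.sinh s) + μ ^ 2 * (2 * Real.sinh s * Real.cosh s)) s := by
    have h1 : HasDerivAt (fun x => Real.cosh x ^ 2) (2 * Real.cosh s * Real.sinh s) s := by
      simpa using ((Real.hasDerivAt_cosh s).fun_pow 2)
    have h2 : HasDerivAt (fun x => Real.sinh x ^ 2) (2 * Real.sinh s * Real.cosh s) s := by
      simpa using ((Real.hasDerivAt_sinh s).fun_pow 2)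
    exact (h1.const_mul _).add (h2.const_mul _)
  have hrderiv : HasDerivAt r
      ((ℓ ^ 2 * (2 * Real.cosh s * Real.sinh s) + μ ^ 2 * (2 * Real.sinh s * Real.cosh s))
        / (2 * Real.sqrt R)) s := by
    have h := hRderiv.sqrt hR'
    exact h.congr_of_eventuallyEq (Filter.Eventually.of_forall fun x => hr x)
  have hrsq : r s ^ 2 = R := by rw [hr s, Real.sq_sqrt hRpos.le]
  have hsqR : Real.sqrt R ^ 2 = R := Real.sq_sqrt hRpos.le
  have hsqRpos : 0 < Real.sqrt R := Real.sqrt_pos.mpr hRpos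
  refine ⟨by rw [hrsq, hφval]; field_simp, ?_⟩
  rw [hrderiv.deriv, hrsq, hφval, div_pow]
  have h2R : (2 * Real.sqrt R) ^ 2 = 4 * R := by rw [mul_pow, hsqR]; ring
  have hRmu : R + μ ^ 2 = (ℓ ^ 2 + μ ^ 2) * Real.cosh s ^ 2 := by
    rw [hRdef]; linear_combination -μ ^ 2 * hcs
  have e1 : (ℓ ^ 2 * (2 * Real.cosh s * Real.sinh s) + μ ^ 2 * (2 * Real.sinh s * Real.cosh s)) ^ 2
      = 4 * Real.cosh s ^ 2 * Real.sinh s ^ 2 * (ℓ ^ 2 + μ ^ 2) ^ 2 := by ring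
  rw [h2R, hRmu, e1]
  have e2 : 4 * Real.cosh s ^ 2 * Real.sinh s ^ 2 * (ℓ ^ 2 + μ ^ 2) ^ 2 / (4 * R)
      / ((ℓ ^ 2 + μ ^ 2) * Real.cosh s ^ 2) = (ℓ ^ 2 + μ ^ 2) * Real.sinh s ^ 2 / R := by
    have hlm : (0:ℝ) < ℓ ^ 2 + μ ^ 2 := by positivity
    field_simp; try ring
  have e3 : R * (ℓ / R) ^ 2 = ℓ ^ 2 / R := by field_simp; try ring
  rw [e2, e3, ← add_div, div_eq_one_iff_eq hR', hRdef]
  linear_combination -ℓ ^ 2 * hcs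
end

section
/- Let Δt and Δφ be real with 0 ≤ Δt < Δφ < π (so cos Δt > cos Δφ). Define, for s ∈ ℝ, t(s) = arctan(tan(Δt/2)·tanh s), φ(s) = arctan(tan(Δφ/2)·tanh s), and r(s) = √((cosh 2s + cos Δφ)/(cos Δt − cos Δφ)). Then for every s: (r(s)²+1)·t'(s) = sin Δt/(cos Δt − cos Δφ), r(s)²·φ'(s) = sin Δφ/(cos Δt − cos Δφ), and −(r(s)²+1)·t'(s)² + r'(s)²/(r(s)²+1) + r(s)²·φ'(s)² = 1. -/
open Real

lemma myHasDerivAt_tanh (x : ℝ) : HasDerivAt Real.tanh (1 / Real.cosh x ^ 2) x := by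
  have h := (Real.hasDerivAt_sinh x).div (Real.hasDerivAt_cosh x) (Real.cosh_pos x).ne'
  have he : Real.tanh = fun x => Real.sinh x / Real.cosh x :=
    funext fun x => Real.tanh_eq_sinh_div_cosh x
  rw [he]
  refine h.congr_deriv ?_
  have := Real.cosh_sq_sub_sinh_sq x
  congr 1
  nlinarith [this]

set_option maxHeartbeats 2000000 in
/-- The curve t(s) = arctan(tan(Δt/2)·tanh s), φ(s) = arctan(tan(Δφ/2)·tanh s),
r(s) = √((cosh 2s + cos Δφ)/(cos Δt − cos Δφ)) is a unit-speed spacelike geodesic of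
global AdS₃ with constant energy (r²+1)·t' and angular momentum r²·φ'. -/
theorem spacelike_geodesic_identities (Δt Δφ : ℝ) (h0 : 0 ≤ Δt) (h1 : Δt < Δφ)
    (h2 : Δφ < Real.pi)
    (t φ r : ℝ → ℝ)
    (ht : ∀ s, t s = Real.arctan (Real.tan (Δt / 2) * Real.tanh s))
    (hφ : ∀ s, φ s = Real.arctan (Real.tan (Δφ / 2) * Real.tanh s))
    (hr : ∀ s, r s = Real.sqrt ((Real.cosh (2 * s) + Real.cos Δφ)
        / (Real.cos Δt - Real.cos Δφ))) :
    ∀ s, (r s ^ 2 + 1) * deriv t s = Real.sin Δt / (Real.cos Δt - Real.cos Δφ) ∧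
      r s ^ 2 * deriv φ s = Real.sin Δφ / (Real.cos Δt - Real.cos Δφ) ∧
      -(r s ^ 2 + 1) * (deriv t s) ^ 2 + (deriv r s) ^ 2 / (r s ^ 2 + 1)
        + r s ^ 2 * (deriv φ s) ^ 2 = 1 := by
  have htf : t = fun s => Real.arctan (Real.tan (Δt / 2) * Real.tanh s) := funext ht
  have hφf : φ = fun s => Real.arctan (Real.tan (Δφ / 2) * Real.tanh s) := funext hφ
  have hrf : r = fun s => Real.sqrt ((Real.cosh (2 * s) + Real.cos Δφ)
      / (Real.cos Δt - Real.cos Δφ)) := funext hr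
  subst htf hφf hrf
  intro s
  have hπ := Real.pi_pos
  set a := Real.tan (Δt / 2) with ha
  set b := Real.tan (Δφ / 2) with hb
  have hct : 0 < Real.cos (Δt / 2) :=
    Real.cos_pos_of_mem_Ioo ⟨by linarith, by linarith⟩
  have hcφ : 0 < Real.cos (Δφ / 2) :=
    Real.cos_pos_of_mem_Ioo ⟨by linarith, by linarith⟩
  have hDpos : 0 < Real.cos Δt - Real.cos Δφ := by
    have := Real.cos_lt_cos_of_nonneg_of_le_pi h0 h2.le h1; linarith
  have hcosφ : -1 < Real.cos Δφ := by
    have := Real.cos_lt_cos_of_nonneg_of_le_pi (by linarith : (0:ℝ) ≤ Δφ) le_rfl h2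
    rw [Real.cos_pi] at this; linarith
  have hpa : Real.sin (Δt/2)^2 + Real.cos (Δt/2)^2 = 1 := Real.sin_sq_add_cos_sq _
  have hpb : Real.sin (Δφ/2)^2 + Real.cos (Δφ/2)^2 = 1 := Real.sin_sq_add_cos_sq _
  have h1a : (0:ℝ) < 1 + a^2 := by positivity
  have h1b : (0:ℝ) < 1 + b^2 := by positivity
  have hcosΔt : Real.cos Δt = (1 - a^2)/(1 + a^2) := by
    rw [show Δt = 2*(Δt/2) by ring, Real.cos_two_mul,
      show a = Real.sin (Δt/2)/Real.cos (Δt/2) from Real.tan_eq_sin_div_cos _]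
    field_simp
    nlinarith [hpa]
  have hsinΔt : Real.sin Δt = 2*a/(1 + a^2) := by
    rw [show Δt = 2*(Δt/2) by ring, Real.sin_two_mul,
      show a = Real.sin (Δt/2)/Real.cos (Δt/2) from Real.tan_eq_sin_div_cos _]
    field_simp
    linear_combination (Real.sin (Δt/2)) * hpa
  have hcosΔφ : Real.cos Δφ = (1 - b^2)/(1 + b^2) := by
    rw [show Δφ = 2*(Δφ/2) by ring, Real.cos_two_mul,
      show b = Real.sin (Δφ/2)/Real.cos (Δφ/2) from Real.tan_eq_sin_div_cos _]
    field_simp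
    nlinarith [hpb]
  have hsinΔφ : Real.sin Δφ = 2*b/(1 + b^2) := by
    rw [show Δφ = 2*(Δφ/2) by ring, Real.sin_two_mul,
      show b = Real.sin (Δφ/2)/Real.cos (Δφ/2) from Real.tan_eq_sin_div_cos _]
    field_simp
    linear_combination (Real.sin (Δφ/2)) * hpb
  have hDval : Real.cos Δt - Real.cos Δφ = 2*(b^2 - a^2)/((1 + a^2)*(1 + b^2)) := by
    rw [hcosΔt, hcosΔφ]; field_simp; ring
  have hba : 0 < b^2 - a^2 := by
    have h := hDpos; rw [hDval] at h
    have h12 : (0:ℝ) < (1+a^2)*(1+b^2) := by positivity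
    rcases div_pos_iff.mp h with ⟨h', _⟩ | ⟨_, h''⟩
    · linarith
    · linarith
  set C := Real.cosh s with hCdef
  have hC : 0 < C := Real.cosh_pos s
  have hC1 : 1 ≤ C := Real.one_le_cosh s
  have hS2 : Real.sinh s ^ 2 = C^2 - 1 := Real.sinh_sq s
  have hcosh2 : Real.cosh (2*s) = 2*C^2 - 1 := by
    rw [Real.cosh_two_mul, Real.sinh_sq]; ring
  have hsinh2sq : Real.sinh (2*s)^2 = 4*(C^2-1)*C^2 := by
    rw [Real.sinh_two_mul]; nlinarith [hS2]
  have hEt : 0 < C^2 + a^2*(C^2-1) := by nlinarith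
  have hEφ : 0 < C^2 + b^2*(C^2-1) := by nlinarith
  -- derivative of t
  have hdent : 1 + (a * Real.tanh s)^2 = (C^2 + a^2*(C^2-1))/C^2 := by
    rw [Real.tanh_eq_sinh_div_cosh]
    field_simp
    nlinarith [hS2]
  have hdtA : HasDerivAt (fun s => Real.arctan (a * Real.tanh s))
      ((1/(1 + (a * Real.tanh s)^2)) * (a * (1/Real.cosh s^2))) s :=
    (Real.hasDerivAt_arctan _).comp s ((myHasDerivAt_tanh s).const_mul a)
  have hdt : deriv (fun s => Real.arctan (a * Real.tanh s)) s
      = a / (C^2 + a^2*(C^2-1)) := by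
    rw [hdtA.deriv, hdent, ← hCdef]
    field_simp
  have hdenφ : 1 + (b * Real.tanh s)^2 = (C^2 + b^2*(C^2-1))/C^2 := by
    rw [Real.tanh_eq_sinh_div_cosh]
    field_simp
    nlinarith [hS2]
  have hdφA : HasDerivAt (fun s => Real.arctan (b * Real.tanh s))
      ((1/(1 + (b * Real.tanh s)^2)) * (b * (1/Real.cosh s^2))) s :=
    (Real.hasDerivAt_arctan _).comp s ((myHasDerivAt_tanh s).const_mul b)
  have hdφ : deriv (fun s => Real.arctan (b * Real.tanh s)) s
      = b / (C^2 + b^2*(C^2-1)) := by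
    rw [hdφA.deriv, hdenφ, ← hCdef]
    field_simp
  -- derivative of r
  have hFpos : 0 < Real.cosh (2*s) + Real.cos Δφ := by
    nlinarith [Real.one_le_cosh (2*s)]
  have hfpos : 0 < (Real.cosh (2*s) + Real.cos Δφ)/(Real.cos Δt - Real.cos Δφ) :=
    div_pos hFpos hDpos
  have hfd : HasDerivAt (fun x => (Real.cosh (2*x) + Real.cos Δφ)/(Real.cos Δt - Real.cos Δφ))
      (Real.sinh (2*s) * 2 / (Real.cos Δt - Real.cos Δφ)) s := by
    have hid : HasDerivAt (fun x : ℝ => 2*x) 2 s := by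
      simpa using (hasDerivAt_id s).const_mul 2
    exact (((Real.hasDerivAt_cosh (2*s)).comp s hid).add_const _).div_const _
  have hrdA : HasDerivAt (fun x => Real.sqrt ((Real.cosh (2*x) + Real.cos Δφ)
      /(Real.cos Δt - Real.cos Δφ)))
      ((1/(2*Real.sqrt ((Real.cosh (2*s) + Real.cos Δφ)/(Real.cos Δt - Real.cos Δφ))))
        * (Real.sinh (2*s) * 2 / (Real.cos Δt - Real.cos Δφ))) s :=
    (Real.hasDerivAt_sqrt hfpos.ne').comp s hfd
  have hsq : Real.sqrt ((Real.cosh (2*s) + Real.cos Δφ)/(Real.cos Δt - Real.cos Δφ)) ^ 2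
      = (Real.cosh (2*s) + Real.cos Δφ)/(Real.cos Δt - Real.cos Δφ) :=
    Real.sq_sqrt hfpos.le
  have hsqne : Real.sqrt ((Real.cosh (2*s) + Real.cos Δφ)/(Real.cos Δt - Real.cos Δφ)) ≠ 0 :=
    (Real.sqrt_pos.mpr hfpos).ne'
  have hdr2 : (deriv (fun x => Real.sqrt ((Real.cosh (2*x) + Real.cos Δφ)
      /(Real.cos Δt - Real.cos Δφ))) s)^2
      = Real.sinh (2*s)^2 / ((Real.cos Δt - Real.cos Δφ) * (Real.cosh (2*s) + Real.cos Δφ)) := by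
    rw [hrdA.deriv]
    simp only [mul_pow, div_pow, one_pow, hsq]
    field_simp
  have hr2 : (fun x => Real.sqrt ((Real.cosh (2*x) + Real.cos Δφ)
      /(Real.cos Δt - Real.cos Δφ))) s ^ 2
      = (Real.cosh (2*s) + Real.cos Δφ)/(Real.cos Δt - Real.cos Δφ) := hsq
  -- clean notation
  simp only [hdt, hdφ, hdr2, hsq]
  rw [hcosh2, hsinh2sq, hsinΔt, hsinΔφ, hDval, hcosΔφ]
  have hne1 : (b^2 - a^2) ≠ 0 := hba.ne'
  clear_value a b C
  clear ha hb hCdef ht hφ hr hdt hdφ hdr2 hsq hsqne hrdA hfd hdtA hdφA hdent hdenφ hcosΔt hsinΔt hcosΔφ hsinΔφ hDval hcosh2 hsinh2sq hS2 hfpos hFpos hr2 hpa hpb hct hcφ hcosφ hDpos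
  have hFφ : 2*C^2-1 + (1-b^2)/(1+b^2) = 2*(C^2+b^2*(C^2-1))/(1+b^2) := by
    field_simp; ring
  have hρ : 2*(C^2+b^2*(C^2-1))/(1+b^2) / (2*(b^2-a^2)/((1+a^2)*(1+b^2)))
      = (C^2+b^2*(C^2-1))*(1+a^2)/(b^2-a^2) := by
    field_simp
  have hρ1 : (C^2+b^2*(C^2-1))*(1+a^2)/(b^2-a^2) + 1
      = (C^2+a^2*(C^2-1))*(1+b^2)/(b^2-a^2) := by
    field_simp; ring
  refine ⟨?_, ?_, ?_⟩
  · field_simp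
    ring
  · field_simp
    ring
  · rw [hFφ, hρ, hρ1]
    have hEφ' : C ^ 2 + (C ^ 2 - 1) * b ^ 2 ≠ 0 := (by nlinarith : 0 < C ^ 2 + (C ^ 2 - 1) * b ^ 2).ne'
    have hEt' := hEt.ne'
    field_simp
    ring
end

section
/- Let x and θ be real with 0 < x ≤ θ < π. Then sin²((θ−x)/2)·sin((x+2θ)/2) = sin³(x/2) if and only if sin(θ − x/2) = 2·sin(x/2). -/
open Real

lemma key_factor (a b : ℝ) :
    sin a ^ 2 * sin (a + a + b + b + b) - sin b ^ 3 =
      sin (a + b) ^ 2 * (sin (a + a + b) - 2 * sin b) := by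
  have h1 := sin_sq_add_cos_sq a
  have h2 := sin_sq_add_cos_sq b
  simp only [sin_add, cos_add]
  linear_combination (sin b ^ 3 - cos a ^ 2 * sin b ^ 3 - 4 * sin a * cos a * sin b ^ 2 * cos b -
    2 * sin a ^ 2 * sin b * cos b ^ 2 + sin a ^ 2 * sin b ^ 3) * h1

/-- In 3-to-3 holographic scattering in pure AdS₃, the entanglement-wedge phase boundary
sin²((θ−x)/2)·sin((x+2θ)/2) = sin³(x/2) coincides with the scattering threshold
sin(θ−x/2) = 2 sin(x/2) on the physical domain 0 < x ≤ θ < π. -/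
theorem phase_boundary_iff_scattering_threshold (x θ : ℝ)
    (hx : 0 < x) (hxθ : x ≤ θ) (hθ : θ < Real.pi) :
    Real.sin ((θ - x) / 2) ^ 2 * Real.sin ((x + 2 * θ) / 2) = Real.sin (x / 2) ^ 3 ↔
      Real.sin (θ - x / 2) = 2 * Real.sin (x / 2) := by
  set a := (θ - x) / 2 with ha
  set b := x / 2 with hb
  have e1 : (x + 2 * θ) / 2 = a + a + b + b + b := by rw [ha, hb]; ring
  have e2 : θ - x / 2 = a + a + b := by rw [ha, hb]; ring
  have e3 : θ / 2 = a + b := by rw [ha, hb]; ring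
  have hs : 0 < Real.sin (a + b) := by
    rw [← e3]
    apply Real.sin_pos_of_pos_of_lt_pi
    · linarith
    · linarith [Real.pi_pos]
  have hfac := key_factor a b
  rw [e1, e2]
  constructor
  · intro h
    have : sin (a + b) ^ 2 * (sin (a + a + b) - 2 * sin b) = 0 := by
      rw [← hfac, h]; ring
    have h2 : sin (a + a + b) - 2 * sin b = 0 := by
      rcases mul_eq_zero.mp this with h' | h'
      · exact absurd h' (by positivity)
      · exact h'
    linarith
  · intro h
    have : sin (a + a + b) - 2 * sin b = 0 := by linarith
    nlinarith [hfac]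
end

section
/- Let x and θ be real with 0 < x < π and 0 < θ < π. Then sin(θ − x/2) = 2·sin(x/2) if and only if sin(x/2) = sin θ / √(5 + 4·cos θ). -/
/-- For x, θ ∈ (0, π), the 3-to-3 scattering threshold equation sin(θ − x/2) = 2 sin(x/2)
is equivalent to sin(x/2) = sin θ / √(5 + 4 cos θ). -/
theorem threshold_solved_for_x (x θ : ℝ) (hx0 : 0 < x) (hxπ : x < Real.pi)
    (hθ0 : 0 < θ) (hθπ : θ < Real.pi) :
    Real.sin (θ - x / 2) = 2 * Real.sin (x / 2) ↔
      Real.sin (x / 2) = Real.sin θ / Real.sqrt (5 + 4 * Real.cos θ) := by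
  set s := Real.sin (x / 2) with hs_def
  set c := Real.cos (x / 2) with hc_def
  have hs : 0 < s := Real.sin_pos_of_pos_of_lt_pi (by linarith) (by linarith [Real.pi_pos])
  have hc : 0 < c := Real.cos_pos_of_mem_Ioo ⟨by linarith [Real.pi_pos], by linarith⟩
  have hsθ : 0 < Real.sin θ := Real.sin_pos_of_pos_of_lt_pi hθ0 hθπ
  have hcθ : -1 ≤ Real.cos θ := Real.neg_one_le_cos θ
  have hA : (0:ℝ) < 5 + 4 * Real.cos θ := by linarith
  have hsqA : 0 < Real.sqrt (5 + 4 * Real.cos θ) := Real.sqrt_pos.mpr hA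
  have hsqA2 : Real.sqrt (5 + 4 * Real.cos θ) ^ 2 = 5 + 4 * Real.cos θ :=
    Real.sq_sqrt hA.le
  have hpyth : s ^ 2 + c ^ 2 = 1 := Real.sin_sq_add_cos_sq (x / 2)
  have hpythθ : Real.sin θ ^ 2 + Real.cos θ ^ 2 = 1 := Real.sin_sq_add_cos_sq θ
  rw [Real.sin_sub]
  constructor
  · intro h
    have key : Real.sin θ * c = (2 + Real.cos θ) * s := by linear_combination h
    have keysq : (Real.sin θ * c) ^ 2 = ((2 + Real.cos θ) * s) ^ 2 := by rw [key]
    have hsq : s ^ 2 * (5 + 4 * Real.cos θ) = Real.sin θ ^ 2 := by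
      linear_combination -keysq + Real.sin θ ^ 2 * hpyth - s ^ 2 * hpythθ
    rw [eq_div_iff hsqA.ne']
    have h2 : (s * Real.sqrt (5 + 4 * Real.cos θ)) ^ 2 = Real.sin θ ^ 2 := by
      rw [mul_pow, hsqA2]; linarith
    nlinarith [h2, mul_pos hs hsqA, hsθ]
  · intro h
    have hkey : s * Real.sqrt (5 + 4 * Real.cos θ) = Real.sin θ := by
      rw [h]; field_simp
    have hsq : s ^ 2 * (5 + 4 * Real.cos θ) = Real.sin θ ^ 2 := by
      have := congrArg (· ^ 2) hkey
      simp only [mul_pow, hsqA2] at this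
      linarith
    have hc2 : (c * Real.sqrt (5 + 4 * Real.cos θ)) ^ 2 = (2 + Real.cos θ) ^ 2 := by
      rw [mul_pow, hsqA2]
      linear_combination -hsq + (5 + 4 * Real.cos θ) * hpyth - hpythθ
    have hckey : c * Real.sqrt (5 + 4 * Real.cos θ) = 2 + Real.cos θ := by
      nlinarith [hc2, mul_pos hc hsqA, hcθ]
    have hmul : Real.sin θ * (c * Real.sqrt (5 + 4 * Real.cos θ)) =
        (2 + Real.cos θ) * (s * Real.sqrt (5 + 4 * Real.cos θ)) := by
      rw [hkey, hckey]; ring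
    have hmain : Real.sin θ * c = (2 + Real.cos θ) * s :=
      mul_right_cancel₀ hsqA.ne' (by linarith [hmul])
    linear_combination hmain
end

section
/- For integers n ≥ 2, define m_n = 2n/(√(5n² − 8n + 4) − n + 2). Then 5n² − 8n + 4 > 0 and √(5n² − 8n + 4) − n + 2 > 0 for all n ≥ 2; the sequence (m_n) is strictly increasing; m_n < (1+√5)/2 for all n ≥ 2; and m_n → (1+√5)/2 as n → ∞. -/
open Filter

private lemma Dpos (x : ℝ) : 0 < 5 * x ^ 2 - 8 * x + 4 := by
  nlinarith [sq_nonneg (5 * x - 4)]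

private lemma sqA (x : ℝ) : Real.sqrt (5 * x ^ 2 - 8 * x + 4) ^ 2 = 5 * x ^ 2 - 8 * x + 4 :=
  Real.sq_sqrt (Dpos x).le

private lemma denomPos (x : ℝ) (hx : 2 ≤ x) :
    0 < Real.sqrt (5 * x ^ 2 - 8 * x + 4) - x + 2 := by
  have h := sqA x
  have hs := Real.sqrt_nonneg (5 * x ^ 2 - 8 * x + 4)
  nlinarith [h, hs, hx]

private lemma mono_aux (x : ℝ) (hx : 2 ≤ x) :
    2 * x / (Real.sqrt (5 * x ^ 2 - 8 * x + 4) - x + 2)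
      < 2 * (x + 1) / (Real.sqrt (5 * (x + 1) ^ 2 - 8 * (x + 1) + 4) - (x + 1) + 2) := by
  have ha2 := sqA x
  have hb2 := sqA (x + 1)
  have ha := Real.sqrt_nonneg (5 * x ^ 2 - 8 * x + 4)
  have hb := Real.sqrt_nonneg (5 * (x + 1) ^ 2 - 8 * (x + 1) + 4)
  have hd1 := denomPos x hx
  have hd2 := denomPos (x + 1) (by linarith)
  set a := Real.sqrt (5 * x ^ 2 - 8 * x + 4)
  set b := Real.sqrt (5 * (x + 1) ^ 2 - 8 * (x + 1) + 4)
  rw [div_lt_div_iff₀ hd1 hd2]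
  have h1 : 2 * x ^ 2 - 1 < (x + 1) * a := by
    nlinarith [ha2, ha, hx, mul_nonneg (by linarith : (0:ℝ) ≤ x + 1) ha,
      mul_nonneg (by nlinarith : (0:ℝ) ≤ 2 * x ^ 2 - 1) ha]
  have h2 : x * b < (x + 1) * a + 2 := by
    nlinarith [h1, ha2, hb2, ha, hb, hx, mul_nonneg (by linarith : (0:ℝ) ≤ x) hb,
      mul_nonneg (mul_nonneg (by linarith : (0:ℝ) ≤ x) hb) (by linarith : (0:ℝ) ≤ x)]
  nlinarith [h2]

private lemma bound_aux (x : ℝ) (hx : 2 ≤ x) :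
    2 * x / (Real.sqrt (5 * x ^ 2 - 8 * x + 4) - x + 2) < (1 + Real.sqrt 5) / 2 := by
  have ha2 := sqA x
  have ha := Real.sqrt_nonneg (5 * x ^ 2 - 8 * x + 4)
  have hd1 := denomPos x hx
  have hc2 : Real.sqrt 5 ^ 2 = 5 := Real.sq_sqrt (by norm_num)
  have hc0 := Real.sqrt_nonneg 5
  have hc1 : 1 < Real.sqrt 5 := by nlinarith [hc2, hc0]
  have h3 : Real.sqrt (5 * x ^ 2 - 8 * x + 4) < 1 + Real.sqrt 5 * (x - 1) := by
    have hy : (0:ℝ) < 1 + Real.sqrt 5 * (x - 1) := by nlinarith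
    rw [Real.sqrt_lt' hy]
    have h5 : Real.sqrt 5 ^ 2 * (x - 1) ^ 2 = 5 * (x - 1) ^ 2 := by rw [hc2]
    nlinarith [h5, hc1, hx]
  set a := Real.sqrt (5 * x ^ 2 - 8 * x + 4)
  set c := Real.sqrt 5
  rw [div_lt_div_iff₀ hd1 (by norm_num : (0:ℝ) < 2)]
  have key : (a - x + 2) * (a + x - 2) = 4 * x ^ 2 - 4 * x := by nlinarith [ha2]
  have h5 : (a - x + 2) * (a + x - 2) < (a - x + 2) * ((1 + c) * (x - 1)) :=
    mul_lt_mul_of_pos_left (by linarith) hd1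
  nlinarith [h5, key, hx, hd1]

private noncomputable def gslope (y : ℝ) : ℝ :=
  2 / (Real.sqrt (5 - 8 * y + 4 * y ^ 2) - 1 + 2 * y)

private lemma g_cont : ContinuousAt gslope 0 := by
  have hden : Continuous (fun y : ℝ => Real.sqrt (5 - 8 * y + 4 * y ^ 2) - 1 + 2 * y) := by
    apply Continuous.add
    · exact (Real.continuous_sqrt.comp (by continuity)).sub continuous_const
    · exact continuous_const.mul continuous_id
  apply ContinuousAt.div continuousAt_const hden.continuousAt
  have hc2 : Real.sqrt 5 ^ 2 = 5 := Real.sq_sqrt (by norm_num)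
  have hc0 := Real.sqrt_nonneg 5
  have hc1 : 1 < Real.sqrt 5 := by nlinarith
  show Real.sqrt (5 - 8 * 0 + 4 * 0 ^ 2) - 1 + 2 * 0 ≠ 0
  norm_num
  intro h
  nlinarith [h]

private lemma g_zero : gslope 0 = (1 + Real.sqrt 5) / 2 := by
  have hc2 : Real.sqrt 5 ^ 2 = 5 := Real.sq_sqrt (by norm_num)
  have hc0 := Real.sqrt_nonneg 5
  have hc1 : 1 < Real.sqrt 5 := by nlinarith
  unfold gslope
  norm_num
  rw [div_eq_div_iff (by intro h; nlinarith [h]) (by norm_num : (2:ℝ) ≠ 0)]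
  nlinarith

/-- Properties of the small-angle scattering-threshold slopes
m_n = 2n/(√(5n² − 8n + 4) − n + 2): the denominator data are positive, the sequence is
strictly increasing, bounded above by the golden ratio (1+√5)/2, and converges to it. -/
theorem scattering_slope_properties :
    (∀ n : ℕ, 2 ≤ n → 0 < 5 * (n : ℝ) ^ 2 - 8 * n + 4 ∧
      0 < Real.sqrt (5 * (n : ℝ) ^ 2 - 8 * n + 4) - n + 2) ∧
    (∀ n : ℕ, 2 ≤ n →
      2 * (n : ℝ) / (Real.sqrt (5 * (n : ℝ) ^ 2 - 8 * n + 4) - n + 2)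
        < 2 * ((n : ℝ) + 1)
            / (Real.sqrt (5 * ((n : ℝ) + 1) ^ 2 - 8 * ((n : ℝ) + 1) + 4) - ((n : ℝ) + 1) + 2)) ∧
    (∀ n : ℕ, 2 ≤ n →
      2 * (n : ℝ) / (Real.sqrt (5 * (n : ℝ) ^ 2 - 8 * n + 4) - n + 2)
        < (1 + Real.sqrt 5) / 2) ∧
    Tendsto (fun n : ℕ => 2 * (n : ℝ) / (Real.sqrt (5 * (n : ℝ) ^ 2 - 8 * n + 4) - n + 2))
      atTop (nhds ((1 + Real.sqrt 5) / 2)) := by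
  refine ⟨?_, ?_, ?_, ?_⟩
  · intro n hn
    have hx : (2:ℝ) ≤ n := by exact_mod_cast hn
    exact ⟨Dpos _, denomPos _ hx⟩
  · intro n hn
    have hx : (2:ℝ) ≤ n := by exact_mod_cast hn
    exact mono_aux _ hx
  · intro n hn
    have hx : (2:ℝ) ≤ n := by exact_mod_cast hn
    exact bound_aux _ hx
  · have hlim := g_cont.tendsto.comp tendsto_one_div_atTop_nhds_zero_nat
    rw [g_zero] at hlim
    refine hlim.congr' ?_
    filter_upwards [eventually_ge_atTop 1] with n hn
    have hx0 : (0:ℝ) < n := by exact_mod_cast hn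
    show gslope (1 / (n:ℝ)) = _
    unfold gslope
    have hsq : Real.sqrt (5 - 8 * (1 / (n:ℝ)) + 4 * (1 / (n:ℝ)) ^ 2)
        = Real.sqrt (5 * (n:ℝ) ^ 2 - 8 * n + 4) / n := by
      have h1 : 5 - 8 * (1 / (n:ℝ)) + 4 * (1 / (n:ℝ)) ^ 2
          = (5 * (n:ℝ) ^ 2 - 8 * n + 4) / (n:ℝ) ^ 2 := by
        field_simp
      rw [h1, Real.sqrt_div (Dpos (n:ℝ)).le, Real.sqrt_sq hx0.le]
    rw [hsq]
    rw [show Real.sqrt (5 * (n:ℝ) ^ 2 - 8 * n + 4) / n - 1 + 2 * (1 / (n:ℝ))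
        = (Real.sqrt (5 * (n:ℝ) ^ 2 - 8 * n + 4) - n + 2) / n by field_simp]
    rw [div_div_eq_mul_div]
end

section
/- For every integer n ≥ 2 there exists a unique real number m > 1 satisfying (m − 1)^(n−1)·((n−1)·m + 1) = 1, and this m satisfies 1 < m < 2. Moreover, for every ε > 0 there exists N such that for all n ≥ N, the unique such root lies in the interval (2 − ε, 2). -/
private lemma pbs_mono (n : ℕ) (hn : 2 ≤ n) :
    StrictMonoOn (fun m : ℝ => (m - 1) ^ (n - 1) * (((n : ℝ) - 1) * m + 1)) (Set.Ici 1) := by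
  intro a ha b hb hab
  simp only [Set.mem_Ici] at ha hb
  have hn1 : (1:ℝ) ≤ (n:ℝ) - 1 := by
    have : (2:ℝ) ≤ (n:ℝ) := by exact_mod_cast hn
    linarith
  have h1 : (a-1)^(n-1) < (b-1)^(n-1) :=
    pow_lt_pow_left₀ (by linarith) (by linarith) (by omega)
  have hb1 : 1 < b := lt_of_le_of_lt ha hab
  have hpos : 0 < ((n:ℝ)-1)*b + 1 := by nlinarith
  calc (a-1)^(n-1) * (((n:ℝ)-1)*a+1)
      ≤ (a-1)^(n-1) * (((n:ℝ)-1)*b+1) := by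
        apply mul_le_mul_of_nonneg_left (by nlinarith) (pow_nonneg (by linarith) _)
    _ < (b-1)^(n-1) * (((n:ℝ)-1)*b+1) := by
        exact mul_lt_mul_of_pos_right h1 hpos

private lemma pbs_f1 (n : ℕ) (hn : 2 ≤ n) :
    ((1:ℝ) - 1) ^ (n - 1) * (((n : ℝ) - 1) * 1 + 1) = 0 := by
  rw [sub_self, zero_pow (by omega), zero_mul]

private lemma pbs_f2 (n : ℕ) (hn : 2 ≤ n) :
    ((2:ℝ) - 1) ^ (n - 1) * (((n : ℝ) - 1) * 2 + 1) = 2 * n - 1 := by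
  norm_num; ring

/-- For every n ≥ 2 there is a unique real m > 1 with (m−1)^(n−1)·((n−1)m + 1) = 1; it
satisfies 1 < m < 2, and for large n the unique root lies in (2 − ε, 2). -/
theorem phase_boundary_slope_root :
    (∀ n : ℕ, 2 ≤ n →
      ∃! m : ℝ, 1 < m ∧ (m - 1) ^ (n - 1) * (((n : ℝ) - 1) * m + 1) = 1) ∧
    (∀ n : ℕ, 2 ≤ n → ∀ m : ℝ,
      1 < m → (m - 1) ^ (n - 1) * (((n : ℝ) - 1) * m + 1) = 1 → m < 2) ∧
    (∀ ε : ℝ, 0 < ε → ∃ N : ℕ, ∀ n : ℕ, N ≤ n → 2 ≤ n → ∀ m : ℝ,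
      1 < m → (m - 1) ^ (n - 1) * (((n : ℝ) - 1) * m + 1) = 1 → 2 - ε < m ∧ m < 2) := by
  have hlt2 : ∀ n : ℕ, 2 ≤ n → ∀ m : ℝ,
      1 < m → (m - 1) ^ (n - 1) * (((n : ℝ) - 1) * m + 1) = 1 → m < 2 := by
    intro n hn m hm heq
    by_contra h
    push_neg at h
    have hn2 : (2:ℝ) ≤ (n:ℝ) := by exact_mod_cast hn
    have := (pbs_mono n hn).le_iff_le (by simp : (2:ℝ) ∈ Set.Ici 1) (Set.mem_Ici.mpr hm.le) |>.mpr h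
    simp only [pbs_f2 n hn, heq] at this
    linarith
  refine ⟨?_, hlt2, ?_⟩
  · intro n hn
    -- existence via IVT
    have hcont : ContinuousOn (fun m : ℝ => (m - 1) ^ (n - 1) * (((n : ℝ) - 1) * m + 1))
        (Set.Icc 1 2) := by fun_prop
    have hn2 : (2:ℝ) ≤ (n:ℝ) := by exact_mod_cast hn
    have hmem : (1:ℝ) ∈ Set.Icc ((fun m : ℝ => (m - 1) ^ (n - 1) * (((n : ℝ) - 1) * m + 1)) 1)
        ((fun m : ℝ => (m - 1) ^ (n - 1) * (((n : ℝ) - 1) * m + 1)) 2) := by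
      simp only [pbs_f1 n hn, pbs_f2 n hn]
      constructor <;> linarith
    obtain ⟨m, hm, hfm'⟩ := intermediate_value_Icc (by norm_num : (1:ℝ) ≤ 2) hcont hmem
    have hfm : (m - 1) ^ (n - 1) * (((n : ℝ) - 1) * m + 1) = 1 := hfm'
    have hm1 : 1 < m := by
      rcases lt_or_eq_of_le hm.1 with h | h
      · exact h
      · exfalso; rw [← h] at hfm; rw [pbs_f1 n hn] at hfm; norm_num at hfm
    refine ⟨m, ⟨hm1, hfm⟩, ?_⟩
    intro y ⟨hy1, hfy⟩
    exact (pbs_mono n hn).injOn (Set.mem_Ici.mpr hy1.le) (Set.mem_Ici.mpr hm1.le)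
      (by rw [hfy, hfm])
  · intro ε hε
    rcases le_or_gt 1 ε with hε1 | hε1
    · exact ⟨2, fun n hN hn m hm heq => ⟨by linarith, hlt2 n hn m hm heq⟩⟩
    · set r : ℝ := 1 - ε with hr
      have hr0 : 0 < r := by simp [hr]; linarith
      have hr1 : r < 1 := by simp [hr]; linarith
      -- F k = r^k * (k*(2-ε) + 1) tends to 0
      have hF : Filter.Tendsto (fun k : ℕ => r ^ k * ((k:ℝ) * (2 - ε) + 1)) Filter.atTop (nhds 0) := by
        have h1 : Filter.Tendsto (fun k : ℕ => (k:ℝ) * r ^ k) Filter.atTop (nhds 0) := by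
          have := (summable_pow_mul_geometric_of_norm_lt_one 1
            (by rw [Real.norm_eq_abs, abs_of_pos hr0]; exact hr1 : ‖r‖ < 1)).tendsto_atTop_zero
          simpa [pow_one] using this
        have h2 : Filter.Tendsto (fun k : ℕ => r ^ k) Filter.atTop (nhds 0) :=
          tendsto_pow_atTop_nhds_zero_of_lt_one hr0.le hr1
        have := ((h1.const_mul (2 - ε)).add h2)
        simp only [mul_zero, zero_mul, add_zero, zero_add] at this
        convert this using 2 with k
        ring
      -- so f n (2-ε) tends to 0 along n
      have hF2 : Filter.Tendsto (fun n : ℕ =>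
          ((2 - ε : ℝ) - 1) ^ (n - 1) * (((n : ℝ) - 1) * (2 - ε) + 1)) Filter.atTop (nhds 0) := by
        have hshift : Filter.Tendsto (fun n : ℕ => n - 1) Filter.atTop Filter.atTop :=
          Filter.tendsto_sub_atTop_nat 1
        have := hF.comp hshift
        apply this.congr'
        filter_upwards [Filter.eventually_ge_atTop 1] with n hn1
        have : ((n:ℝ) - 1) = ((n - 1 : ℕ) : ℝ) := by
          push_cast [Nat.cast_sub hn1]; ring
        simp only [Function.comp, this, hr]
        ring_nf
      have hev : ∀ᶠ n : ℕ in Filter.atTop,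
          ((2 - ε : ℝ) - 1) ^ (n - 1) * (((n : ℝ) - 1) * (2 - ε) + 1) < 1 :=
        hF2.eventually_lt_const (by norm_num)
      obtain ⟨N, hN⟩ := Filter.eventually_atTop.mp hev
      refine ⟨N, fun n hn' hn m hm heq => ⟨?_, hlt2 n hn m hm heq⟩⟩
      have hlt := hN n hn'
      by_contra h
      push_neg at h
      have := (pbs_mono n hn).le_iff_le (Set.mem_Ici.mpr hm.le)
        (Set.mem_Ici.mpr (by linarith : (1:ℝ) ≤ 2 - ε)) |>.mpr h
      rw [heq] at this
      linarith
end
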